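/- Let ω > 0, A = [[0, 1], [−ω², 0]], and P(t) = [[0, 0], [−ω² cos(2ωt + θ), 0]]. Then lim_{T→∞} (1/T) ∫₀ᵀ e^{−Aτ} P(τ) e^{Aτ} dτ exists and equals B = −(1/4) [[ω sin θ, cos θ], [ω² cos θ, −ω sin θ]]. -/

import Mathlib

/-!
Since `A² = -ω²`, the map `x + iy ↦ x + (y/ω) A` embeds `ℂ` into the `2 × 2` matrices and sends
`e^{iωt}` to `e^{tA}`, so `e^{tA} = cos(ωt) + (sin(ωt)/ω) A`. Conjugating `P(τ)` by it and using the
product-to-sum formulas, the integrand is `B` plus constant matrices times `cos(2ωτ+θ)`,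
`cos(4ωτ+θ)` and `sin(4ωτ+θ)`. These oscillating terms have bounded primitives, so their time
averages tend to `0`.
-/

open Matrix Filter Topology

attribute [local instance] Matrix.linftyOpNormedRing Matrix.linftyOpNormedAlgebra

theorem exp_smul_eq_cos_add_sin {𝔸 : Type*} [NormedRing 𝔸] [NormedAlgebra ℝ 𝔸] [Algebra ℚ 𝔸]
    {A : 𝔸} {ω : ℝ} (hω : ω ≠ 0) (hA : A * A = (-ω ^ 2) • 1) (t : ℝ) :
    NormedSpace.exp (t • A) = Real.cos (ω * t) • 1 + (Real.sin (ω * t) / ω) • A := by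
  have hJ : (ω⁻¹ • A) * (ω⁻¹ • A) = -1 := by
    rw [smul_mul_smul, hA, smul_smul, show ω⁻¹ * ω⁻¹ * -ω ^ 2 = -1 by field_simp, neg_one_smul]
  let φ := Complex.liftAux _ hJ
  have hφ : Continuous φ := by
    change Continuous fun z : ℂ => algebraMap ℝ 𝔸 z.re + z.im • (ω⁻¹ • A)
    fun_prop
  have hφ_apply (x y : ℝ) : φ (x + y * Complex.I) = x • 1 + (y / ω) • A := by
    rw [← Complex.mk_eq_add_mul_I, Complex.liftAux_apply, Algebra.algebraMap_eq_smul_one, smul_smul,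
      div_eq_mul_inv]
  have hφI : φ ((ω * t : ℝ) * Complex.I) = t • A := by
    simpa [mul_div_cancel_left₀ t hω] using hφ_apply 0 (ω * t)
  rw [← hφI, ← NormedSpace.map_exp φ hφ, ← Complex.exp_eq_exp_ℂ, Complex.exp_mul_I,
    ← Complex.ofReal_cos, ← Complex.ofReal_sin, hφ_apply]

section

variable {E : Type*} [NormedAddCommGroup E] [NormedSpace ℝ E]

theorem hasDerivAt_sin_mul_add_div_smul {a : ℝ} (ha : a ≠ 0) (φ : ℝ) (u : E) (τ : ℝ) :
    HasDerivAt (fun τ => (Real.sin (a * τ + φ) / a) • u) (Real.cos (a * τ + φ) • u) τ := by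
  have h := ((((hasDerivAt_id' τ).const_mul a).add_const φ).sin.div_const a).smul_const u
  convert h using 1
  field_simp

theorem hasDerivAt_neg_cos_mul_add_div_smul {a : ℝ} (ha : a ≠ 0) (φ : ℝ) (u : E) (τ : ℝ) :
    HasDerivAt (fun τ => (-Real.cos (a * τ + φ) / a) • u) (Real.sin (a * τ + φ) • u) τ := by
  refine ((((hasDerivAt_id' τ).const_mul a).add_const φ).cos.neg.div_const a).smul_const u
    |>.congr_deriv ?_
  congr 1
  field_simp

theorem norm_div_smul_le {s : ℝ} (hs : |s| ≤ 1) (a : ℝ) (u : E) : ‖(s / a) • u‖ ≤ ‖u‖ / |a| := by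
  rw [norm_smul, Real.norm_eq_abs, abs_div, div_mul_eq_mul_div]
  gcongr
  exact mul_le_of_le_one_left (norm_nonneg u) hs

theorem tendsto_inv_smul_integral_const_add_of_hasDerivAt [CompleteSpace E] {f G : ℝ → E} (c : E)
    (hG : ∀ τ, HasDerivAt G (f τ) τ) (hf : Continuous f) (hG_bdd : ∃ C, ∀ τ, ‖G τ‖ ≤ C) :
    Tendsto (fun T : ℝ => (1 / T) • ∫ τ in (0:ℝ)..T, (c + f τ)) atTop (𝓝 c) := by
  have hint : ∀ T : ℝ, ∫ τ in (0:ℝ)..T, (c + f τ) = T • c + (G T - G 0) := fun T => by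
    rw [intervalIntegral.integral_add intervalIntegrable_const (hf.intervalIntegrable _ _),
      intervalIntegral.integral_const, sub_zero,
      intervalIntegral.integral_eq_sub_of_hasDerivAt (fun τ _ => hG τ) (hf.intervalIntegrable _ _)]
  obtain ⟨C, hGC⟩ := hG_bdd
  have hG0 : Tendsto (fun T : ℝ => (1 / T) • (G T - G 0)) atTop (𝓝 0) := by
    refine (tendsto_inv_atTop_zero.congr fun T => (one_div T).symm).zero_smul_isBoundedUnder_le
      (isBoundedUnder_of ⟨C + C, fun T => ?_⟩)
    exact (norm_sub_le _ _).trans (add_le_add (hGC T) (hGC 0))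
  have heq : (fun T : ℝ => c + (1 / T) • (G T - G 0)) =ᶠ[atTop]
      fun T => (1 / T) • ∫ τ in (0:ℝ)..T, (c + f τ) := by
    filter_upwards [eventually_ne_atTop 0] with T hT
    rw [hint, smul_add, smul_smul, one_div_mul_cancel hT, one_smul]
  simpa using (tendsto_const_nhds.add hG0).congr' heq

end

theorem exp_neg_smul_mul_mul_exp_smul {ω : ℝ} (hω : ω ≠ 0) (θ τ : ℝ) :
    NormedSpace.exp ((-τ) • (!![0, 1; -ω ^ 2, 0] : Matrix (Fin 2) (Fin 2) ℝ))
        * !![0, 0; -(ω ^ 2 * Real.cos (2 * ω * τ + θ)), 0]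
        * NormedSpace.exp (τ • (!![0, 1; -ω ^ 2, 0] : Matrix (Fin 2) (Fin 2) ℝ))
      = (-(1/4 : ℝ)) • !![ω * Real.sin θ, Real.cos θ; ω ^ 2 * Real.cos θ, -(ω * Real.sin θ)]
        + (Real.cos (2 * ω * τ + θ) • !![0, 1 / 2; -ω ^ 2 / 2, 0]
          + Real.cos (4 * ω * τ + θ) • !![0, -1 / 4; -ω ^ 2 / 4, 0]
          + Real.sin (4 * ω * τ + θ) • !![ω / 4, 0; 0, -ω / 4]) := by
  have hA : (!![0, 1; -ω ^ 2, 0] : Matrix (Fin 2) (Fin 2) ℝ) * !![0, 1; -ω ^ 2, 0]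
      = (-ω ^ 2) • 1 := by
    ext i j; fin_cases i <;> fin_cases j <;> simp
  have hexp : ∀ t : ℝ, NormedSpace.exp (t • (!![0, 1; -ω ^ 2, 0] : Matrix (Fin 2) (Fin 2) ℝ))
      = !![Real.cos (ω * t), Real.sin (ω * t) / ω; -(ω * Real.sin (ω * t)), Real.cos (ω * t)] := by
    intro t
    refine (exp_smul_eq_cos_add_sin (𝔸 := Matrix (Fin 2) (Fin 2) ℝ) hω hA t).trans ?_
    ext i j; fin_cases i <;> fin_cases j <;> simp [field]
  have hsin : Real.sin (4 * ω * τ + θ) - Real.sin θ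
      = 4 * Real.sin (ω * τ) * Real.cos (ω * τ) * Real.cos (2 * ω * τ + θ) := by
    rw [Real.sin_sub_sin, show (4 * ω * τ + θ - θ) / 2 = 2 * (ω * τ) by ring,
      show (4 * ω * τ + θ + θ) / 2 = 2 * ω * τ + θ by ring, Real.sin_two_mul]
    ring
  have hcos : Real.cos (4 * ω * τ + θ) + Real.cos θ
      = 2 * (2 * Real.cos (ω * τ) ^ 2 - 1) * Real.cos (2 * ω * τ + θ) := by
    rw [Real.cos_add_cos, show (4 * ω * τ + θ - θ) / 2 = 2 * (ω * τ) by ring,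
      show (4 * ω * τ + θ + θ) / 2 = 2 * ω * τ + θ by ring, Real.cos_two_mul]
    ring
  have hpy := Real.sin_sq_add_cos_sq (ω * τ)
  have hωω := mul_inv_cancel₀ hω
  rw [hexp, hexp, mul_fin_two, mul_fin_two, mul_neg, Real.cos_neg, Real.sin_neg]
  ext i j
  fin_cases i <;> fin_cases j <;>
    simp only [Fin.zero_eta, Fin.mk_one, Fin.isValue, Matrix.add_apply, Matrix.smul_apply,
      of_apply, cons_val', cons_val_zero, cons_val_one, cons_val_fin_one, smul_eq_mul]
  · linear_combination (ω * Real.sin (ω * τ) * Real.cos (ω * τ) * Real.cos (2 * ω * τ + θ)) * hωω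
      - ω / 4 * hsin
  · linear_combination (Real.sin (ω * τ) ^ 2 * Real.cos (2 * ω * τ + θ) * (ω * ω⁻¹ + 1)) * hωω
      + 1 / 4 * hcos + Real.cos (2 * ω * τ + θ) * hpy
  · linear_combination ω ^ 2 / 4 * hcos
  · linear_combination -(ω * Real.sin (ω * τ) * Real.cos (ω * τ) * Real.cos (2 * ω * τ + θ)) * hωω
      + ω / 4 * hsin

/-- For `A = [[0,1],[−ω²,0]]` and `P(t) = [[0,0],[−ω² cos(2ωt+θ),0]]`, the time average
`(1/T)∫₀ᵀ e^{−Aτ} P(τ) e^{Aτ} dτ` converges as `T → ∞` to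
`B = −(1/4)[[ω sin θ, cos θ],[ω² cos θ, −ω sin θ]]`. -/
theorem stmt_16 (ω θ : ℝ) (hω : 0 < ω) :
    let A : Matrix (Fin 2) (Fin 2) ℝ := !![0, 1; -ω ^ 2, 0]
    let P : ℝ → Matrix (Fin 2) (Fin 2) ℝ := fun t =>
      !![0, 0; -(ω ^ 2 * Real.cos (2 * ω * t + θ)), 0]
    Tendsto (fun T : ℝ =>
        (1 / T) • ∫ τ in (0:ℝ)..T,
          NormedSpace.exp ((-τ) • A) * P τ * NormedSpace.exp (τ • A))
      atTop
      (nhds ((-(1/4 : ℝ)) • !![ω * Real.sin θ, Real.cos θ;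
                               ω ^ 2 * Real.cos θ, -(ω * Real.sin θ)])) := by
  intro A P
  have h2 : 2 * ω ≠ 0 := by positivity
  have h4 : 4 * ω ≠ 0 := by positivity
  simp only [A, P, exp_neg_smul_mul_mul_exp_smul hω.ne']
  refine tendsto_inv_smul_integral_const_add_of_hasDerivAt _
    (fun τ => ((hasDerivAt_sin_mul_add_div_smul h2 θ _ τ).add
      (hasDerivAt_sin_mul_add_div_smul h4 θ _ τ)).add
      (hasDerivAt_neg_cos_mul_add_div_smul h4 θ _ τ)) (by fun_prop)
    ⟨_, fun τ => norm_add₃_le.trans (add_le_add_three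
      (norm_div_smul_le (Real.abs_sin_le_one _) _ _) (norm_div_smul_le (Real.abs_sin_le_one _) _ _)
      (norm_div_smul_le ((abs_neg _).trans_le (Real.abs_cos_le_one _)) _ _))⟩
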